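/- Let Z = X + i f(Y) where X, Y are independent standard one-dimensional Brownian motions and f is the 2-periodic seesaw (tent) function with values in [0,1]. Then for every bounded Borel function φ on the strip {z : 0 ≤ Im z ≤ 1}, every x ∈ ℝ, and every t ≥ 0, E[φ(X_t^x + iU)] = E[E_{x+iU}[φ(Z_t)]], where U is uniform on [0,1] independent of everything; i.e. the semigroup of Z is intertwined with that of one-dimensional Brownian motion by the kernel Λ(x,·) = Unif([x, x+i]). -/

import Mathlib

/-!
If `U` is uniform on `[0,1]` and `B` is symmetric and independent of `U`, then `tent (U + B)` is
again uniform on `[0,1]`. Indeed, for fixed `b` the laws of `tent (U + b)` and `tent (U - b)`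
together form the image under `tent` of Lebesgue measure on the full period `[b - 1, b + 1]`,
which is twice the uniform law, and the symmetry of `B` averages the two. Hence `(X, tent (U + Y))`
and `(X, U)` have the same law, and both sides of the identity are integrals against it.
-/

open MeasureTheory ProbabilityTheory intervalIntegral

/-- The 2-periodic "seesaw" (tent) function with values in `[0,1]`. -/
noncomputable def tent (x : ℝ) : ℝ := |x - 2 * round (x / 2)|

lemma tent_eq_abs_two_mul_fract_sub_one (x : ℝ) :
    tent x = |2 * Int.fract (x / 2 + 1 / 2) - 1| := by
  rw [tent, round_eq, Int.fract]
  ring_nf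

@[fun_prop]
lemma measurable_tent : Measurable tent := by
  simp only [funext tent_eq_abs_two_mul_fract_sub_one]
  fun_prop

lemma tent_periodic : Function.Periodic tent 2 := by
  intro x
  rw [tent_eq_abs_two_mul_fract_sub_one, tent_eq_abs_two_mul_fract_sub_one,
    show (x + 2) / 2 + 1 / 2 = x / 2 + 1 / 2 + 1 by ring, Int.fract_add_one]

lemma tent_neg (x : ℝ) : tent (-x) = tent x := by
  simp only [tent_eq_abs_two_mul_fract_sub_one]
  have hx : x / 2 + 1 / 2 = -(-x / 2 + 1 / 2) + 1 := by ring
  rw [hx, Int.fract_add_one]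
  rcases eq_or_ne (Int.fract (-x / 2 + 1 / 2)) 0 with h | h
  · rw [Int.fract_neg_eq_zero.mpr h, h]
  · rw [Int.fract_neg h, abs_sub_comm]
    ring_nf

lemma tent_of_mem_Icc_zero_one {x : ℝ} (hx : x ∈ Set.Icc (0 : ℝ) 1) : tent x = x := by
  rw [tent, round_eq]
  rcases eq_or_lt_of_le hx.2 with rfl | h
  · norm_num
  · rw [Int.floor_eq_zero_iff.mpr ⟨by linarith [hx.1], by linarith⟩]
    simp [abs_of_nonneg hx.1]

lemma tent_of_mem_Icc_one_two {x : ℝ} (hx : x ∈ Set.Icc (1 : ℝ) 2) : tent x = 2 - x := by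
  rw [← tent_of_mem_Icc_zero_one (x := 2 - x) ⟨by linarith [hx.2], by linarith [hx.1]⟩,
    sub_eq_neg_add, tent_periodic, tent_neg]

lemma integral_comp_tent_add_add_integral_comp_tent_sub {g : ℝ → ℝ}
    (hg : ∀ a c : ℝ, IntervalIntegrable (fun w => g (tent w)) volume a c) (b : ℝ) :
    (∫ u in (0 : ℝ)..1, g (tent (u + b))) + ∫ u in (0 : ℝ)..1, g (tent (u - b))
      = 2 * ∫ u in (0 : ℝ)..1, g u := by
  have h_right : (∫ u in (0 : ℝ)..1, g (tent (u + b))) = ∫ w in b..b + 1, g (tent w) := by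
    simpa [add_comm] using integral_comp_add_right (a := 0) (b := 1) (fun w => g (tent w)) b
  have h_left : (∫ u in (0 : ℝ)..1, g (tent (u - b))) = ∫ w in b - 1..b, g (tent w) := by
    have h_neg := integral_comp_neg (a := b - 1) (b := b) (fun w => g (tent w))
    simp only [tent_neg, neg_sub] at h_neg
    rw [integral_comp_sub_right (fun w => g (tent w)) b, h_neg, zero_sub, sub_eq_neg_add]
  have h_period : (∫ w in b - 1..b + 1, g (tent w)) = ∫ w in (0 : ℝ)..2, g (tent w) := by
    simpa [show b - 1 + 2 = b + 1 by ring] using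
      (tent_periodic.comp g).intervalIntegral_add_eq (b - 1) 0
  have h_first : (∫ w in (0 : ℝ)..1, g (tent w)) = ∫ w in (0 : ℝ)..1, g w :=
    integral_congr fun w hw => by
      simp only [tent_of_mem_Icc_zero_one (by simpa using hw)]
  have h_second : (∫ w in (1 : ℝ)..2, g (tent w)) = ∫ w in (0 : ℝ)..1, g w := by
    rw [integral_congr (g := fun w => g (2 - w)) fun w hw => by
      simp only [tent_of_mem_Icc_one_two (by simpa using hw)],
      integral_comp_sub_left g 2]
    norm_num
  rw [h_right, h_left, add_comm, integral_add_adjacent_intervals (hg _ _) (hg _ _), h_period,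
    ← integral_add_adjacent_intervals (b := 1) (hg _ _) (hg _ _), h_first, h_second, two_mul]

lemma integral_integral_comp_tent_add_of_map_neg_eq {ν : Measure ℝ} [IsProbabilityMeasure ν]
    (hν : ν.map Neg.neg = ν) {g : ℝ → ℝ} (hg : Measurable g) {C : ℝ} (hgC : ∀ v, |g v| ≤ C) :
    ∫ b, (∫ u in (0 : ℝ)..1, g (tent (u + b))) ∂ν = ∫ u in (0 : ℝ)..1, g u := by
  set F : ℝ → ℝ := fun b => ∫ u in (0 : ℝ)..1, g (tent (u + b))
  set K := ∫ u in (0 : ℝ)..1, g u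
  have h_loc (a c : ℝ) : IntervalIntegrable (fun w => g (tent w)) volume a c :=
    intervalIntegrable_const.mono_fun' (hg.comp measurable_tent).aestronglyMeasurable
      (ae_of_all _ fun w => hgC (tent w))
  have h_pair (b : ℝ) : F b + F (-b) = 2 * K := by
    simpa only [F, ← sub_eq_add_neg] using
      integral_comp_tent_add_add_integral_comp_tent_sub h_loc b
  have hF_meas : StronglyMeasurable F := by
    simp only [F, integral_of_le zero_le_one]
    exact (show Measurable fun q : ℝ × ℝ => g (tent (q.2 + q.1)) by fun_prop)
      |>.stronglyMeasurable.integral_prod_right'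
  have hF_int : Integrable F ν := Integrable.of_bound hF_meas.aestronglyMeasurable C <|
    ae_of_all _ fun b => by
      simpa using norm_integral_le_of_norm_le_const (a := 0) (b := 1)
        fun u _ => (Real.norm_eq_abs _).trans_le (hgC (tent (u + b)))
  have h_symm : ∫ b, F (-b) ∂ν = ∫ b, F b ∂ν := by
    conv_rhs => rw [← hν, integral_map measurable_neg.aemeasurable hF_meas.aestronglyMeasurable]
  have h_reflect : ∫ b, F (-b) ∂ν = 2 * K - ∫ b, F b ∂ν := by
    rw [integral_congr_ae (ae_of_all _ fun b => eq_sub_of_add_eq' (h_pair b)),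
      integral_sub (integrable_const _) hF_int, MeasureTheory.integral_const, probReal_univ,
      one_smul]
  linarith

lemma map_tent_add_prod_restrict_Icc {ν : Measure ℝ} [IsProbabilityMeasure ν]
    (hν : ν.map Neg.neg = ν) :
    (ν.prod (volume.restrict (Set.Icc (0 : ℝ) 1))).map (fun q => tent (q.2 + q.1))
      = volume.restrict (Set.Icc (0 : ℝ) 1) := by
  have h_Icc (h : ℝ → ℝ) : ∫ u in Set.Icc (0 : ℝ) 1, h u = ∫ u in (0 : ℝ)..1, h u := by
    rw [integral_Icc_eq_integral_Ioc, integral_of_le zero_le_one]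
  have hT : Measurable fun q : ℝ × ℝ => tent (q.2 + q.1) := by fun_prop
  ext s hs
  have h_meas : Measurable (s.indicator (1 : ℝ → ℝ)) := measurable_one.indicator hs
  have h_bound (v : ℝ) : |s.indicator (1 : ℝ → ℝ) v| ≤ 1 := by
    by_cases hv : v ∈ s <;> simp [hv]
  refine (ENNReal.toReal_eq_toReal_iff' (measure_ne_top _ _) (measure_ne_top _ _)).1 ?_
  rw [← measureReal_def, ← measureReal_def, ← integral_indicator_one hs,
    ← integral_indicator_one hs, integral_map hT.aemeasurable h_meas.aestronglyMeasurable,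
    integral_prod _ (.of_bound (f := fun q : ℝ × ℝ => s.indicator 1 (tent (q.2 + q.1)))
      (h_meas.comp hT).aestronglyMeasurable 1
      (ae_of_all _ fun q => h_bound _))]
  simp only [h_Icc]
  exact integral_integral_comp_tent_add_of_map_neg_eq hν h_meas h_bound

lemma gaussianReal_zero_map_neg (v : NNReal) :
    (gaussianReal 0 v).map Neg.neg = gaussianReal 0 v := by
  simpa using gaussianReal_map_neg (μ := 0) (v := v)

/-- `p = (a, b, u)`: `a` and `b` are the increments of `X` and `Y` over `[0, t]`, and `u` is the
value of `U`. -/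
theorem stmt_8_general (φ : ℂ → ℝ) (hφm : Measurable φ)
    (x : ℝ) (t : NNReal) :
    let μ : Measure (ℝ × ℝ × ℝ) :=
      (gaussianReal 0 t).prod ((gaussianReal 0 t).prod (volume.restrict (Set.Icc 0 1)))
    ∫ p, φ ((x + p.1 : ℝ) + Complex.I * (p.2.2 : ℝ)) ∂μ
      = ∫ p, φ ((x + p.1 : ℝ) + Complex.I * (tent (p.2.2 + p.2.1) : ℝ)) ∂μ := by
  intro μ
  set ν := gaussianReal 0 t
  set ρ := volume.restrict (Set.Icc (0 : ℝ) 1)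
  have h_snd : μ.map (Prod.map id Prod.snd) = ν.prod ρ := by
    rw [← Measure.map_prod_map _ _ measurable_id measurable_snd, Measure.map_id,
      Measure.map_snd_prod, measure_univ, one_smul]
  have h_tent : μ.map (Prod.map id fun q => tent (q.2 + q.1)) = ν.prod ρ := by
    rw [← Measure.map_prod_map _ _ measurable_id (by fun_prop), Measure.map_id,
      map_tent_add_prod_restrict_Icc (gaussianReal_zero_map_neg t)]
  set ψ : ℝ × ℝ → ℝ := fun q => φ ((x + q.1 : ℝ) + Complex.I * (q.2 : ℝ))
  have hψ : Measurable ψ := by fun_prop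
  calc ∫ p, ψ (Prod.map id Prod.snd p) ∂μ
      = ∫ q, ψ q ∂(ν.prod ρ) := by
        rw [← h_snd, integral_map (by fun_prop) hψ.aestronglyMeasurable]
    _ = ∫ p, ψ (Prod.map id (fun q => tent (q.2 + q.1)) p) ∂μ := by
        rw [← h_tent, integral_map (by fun_prop) hψ.aestronglyMeasurable]

/-- Intertwining of the strip RBM `Z = X + i·tent(Y)` (with `X, Y` independent
one-dimensional Brownian motions) with one-dimensional Brownian motion, via the
kernel `Λ(x,·) = Unif([x, x+i])`: at every time `t`, for every bounded Borel `φ`,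
`E[φ(X_tˣ + iU)] = E[E_{x+iU}[φ(Z_t)]]`.  Here `a` is the increment of `X`,
`b` the increment of `Y`, both `N(0,t)`, and `U` uniform on `[0,1]`, independent. -/
theorem stmt_8 (φ : ℂ → ℝ) (hφm : Measurable φ) (C : ℝ) (hφb : ∀ z, |φ z| ≤ C)
    (x : ℝ) (t : NNReal) :
    let μ : Measure (ℝ × ℝ × ℝ) :=
      (gaussianReal 0 t).prod ((gaussianReal 0 t).prod (volume.restrict (Set.Icc 0 1)))
    ∫ p, φ ((x + p.1 : ℝ) + Complex.I * (p.2.2 : ℝ)) ∂μ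
      = ∫ p, φ ((x + p.1 : ℝ) + Complex.I * (tent (p.2.2 + p.2.1) : ℝ)) ∂μ :=
  stmt_8_general φ hφm x t
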